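/- Let f : ℝ → ℝ be continuously differentiable on an open interval (a,b), let T = Diag(t₁,…,tₙ) be a real diagonal n×n matrix with tᵢ ∈ (a,b) for all i, and let H be an n×n complex Hermitian matrix. Then the matrix-valued function α ↦ F(T + αH) is differentiable at α = 0 with derivative T_f ⊙ H, where ⊙ is the entrywise (Hadamard) product and T_f is the n×n matrix with entries [T_f]_{ij} = f^{[1]}(tᵢ, tⱼ). -/

import Mathlib

open Matrix

attribute [local instance] Matrix.normedAddCommGroup Matrix.normedSpace

/-- The matrix extension `F` of `f : ℝ → ℝ`: for Hermitian `A = U Diag(λ) U*`,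
`F(A) := U Diag(f(λᵢ)) U*` (junk value `0` if `A` is not Hermitian). -/
noncomputable def matExt {𝕜 : Type*} [RCLike 𝕜] {n : Type*} [Fintype n] [DecidableEq n]
    (f : ℝ → ℝ) (A : Matrix n n 𝕜) : Matrix n n 𝕜 :=
  if hA : A.IsHermitian then
    (hA.eigenvectorUnitary : Matrix n n 𝕜) *
      Matrix.diagonal (fun i => (f (hA.eigenvalues i) : 𝕜)) *
      star (hA.eigenvectorUnitary : Matrix n n 𝕜)
  else 0

/-- The first divided difference of `f`: `(f x − f y)/(x − y)` for `x ≠ y`, and `f'(x)`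
on the diagonal. -/
noncomputable def divDiff (f : ℝ → ℝ) (x y : ℝ) : ℝ :=
  if x = y then deriv f x else (f x - f y) / (x - y)

/-!
Write `f x = f c + (x - c) · dslope f c x`, where `dslope f c` is the divided difference
`f^{[1]}(c, ·)`. The functional calculus turns this into `F(B) = f(c) + (B - c) · G(B)` with
`G = dslope f c`. For `B = T + αH` and `c = tᵢ`, row `i` of `B - tᵢ` is `α` times row `i` of `H`,
so `F(T + αH)ᵢⱼ = f(tᵢ) δᵢⱼ + α (H · G(T + αH))ᵢⱼ`. As `f` is `C¹`, `G` is continuous on `(a,b)`,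
and by upper hemicontinuity of the spectrum, `spec(T + αH) ⊆ (a,b)` for small `α`; hence
`α ↦ G(T + αH)` is continuous at `0`, where it equals `G(T) = Diag(f^{[1]}(tᵢ, tₖ))ₖ`.
-/

open Filter Topology

theorem ContinuousAt.cfc_of_isOpen {X 𝕜 A : Type*} {p : A → Prop} [RCLike 𝕜] [NormedRing A]
    [StarRing A] [NormedAlgebra 𝕜 A] [IsometricContinuousFunctionalCalculus 𝕜 A p]
    [ContinuousStar A] [CompleteSpace A] [TopologicalSpace X] {U : Set 𝕜} (hU : IsOpen U)
    (f : 𝕜 → 𝕜) (hf : ContinuousOn f U) {a : X → A} {x₀ : X} (ha : ContinuousAt a x₀)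
    (ha' : ∀ᶠ x in 𝓝 x₀, p (a x)) (hspec : spectrum 𝕜 (a x₀) ⊆ U) :
    ContinuousAt (fun x ↦ cfc f (a x)) x₀ := by
  obtain ⟨K, hK, hspecK, hKU⟩ := exists_compact_between (spectrum.isCompact (a x₀)) hU hspec
  have hnear : ∀ᶠ x in 𝓝 x₀, spectrum 𝕜 (a x) ⊆ K :=
    ha.eventually ((upperHemicontinuous_spectrum 𝕜 A).upperHemicontinuousAt (a x₀) _
      (subset_interior_iff_mem_nhdsSet.mp hspecK) |>.mono fun _ ↦ subset_of_mem_nhdsSet)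
  exact ha.cfc hK f hnear ha' (hf.mono hKU)

theorem hasDerivAt_sub_smul_of_continuousAt {𝕜 E : Type*} [NontriviallyNormedField 𝕜]
    [NormedAddCommGroup E] [NormedSpace 𝕜 E] {ψ : 𝕜 → E} {x₀ : 𝕜} (hψ : ContinuousAt ψ x₀) :
    HasDerivAt (fun x ↦ (x - x₀) • ψ x) (ψ x₀) x₀ := by
  rw [hasDerivAt_iff_tendsto_slope]
  refine (hψ.tendsto.mono_left nhdsWithin_le_nhds).congr' ?_
  filter_upwards [self_mem_nhdsWithin] with x hx
  rw [slope_def_module, sub_self, zero_smul, sub_zero, smul_smul,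
    inv_mul_cancel₀ (sub_ne_zero.mpr hx), one_smul]

theorem ContDiffOn.continuousOn_dslope {𝕜 E : Type*} [NontriviallyNormedField 𝕜]
    [NormedAddCommGroup E] [NormedSpace 𝕜 E] {f : 𝕜 → E} {U : Set 𝕜} (hU : IsOpen U)
    (hf : ContDiffOn 𝕜 1 f U) {x : 𝕜} (hx : x ∈ U) : ContinuousOn (dslope f x) U :=
  (_root_.continuousOn_dslope (hU.mem_nhds hx)).mpr
    ⟨hf.continuousOn, (hf.differentiableOn one_ne_zero).differentiableAt (hU.mem_nhds hx)⟩

theorem divDiff_eq_dslope (f : ℝ → ℝ) (x y : ℝ) : divDiff f x y = dslope f x y := by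
  rcases eq_or_ne y x with rfl | hyx
  · rw [divDiff, if_pos rfl, dslope_same]
  · rw [divDiff, if_neg hyx.symm, dslope_of_ne _ hyx, slope_def_field, ← neg_div_neg_eq,
      neg_sub, neg_sub]

theorem cfc_eq_algebraMap_add_sub_mul_cfc_dslope {𝕜 A : Type*} {p : A → Prop} [RCLike 𝕜]
    [Ring A] [StarRing A] [TopologicalSpace A] [Algebra 𝕜 A] [ContinuousFunctionalCalculus 𝕜 A p]
    (f : 𝕜 → 𝕜) (c : 𝕜) {a : A} (ha : p a) (hf : ContinuousOn (dslope f c) (spectrum 𝕜 a)) :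
    cfc f a = algebraMap 𝕜 A (f c) + (a - algebraMap 𝕜 A c) * cfc (dslope f c) a := by
  have hfc : f = fun x ↦ f c + (x - c) * dslope f c x := by
    funext x
    rw [← smul_eq_mul, sub_smul_dslope]
    ring
  calc cfc f a = cfc (fun x ↦ f c + (x - c) * dslope f c x) a := by rw [← hfc]
    _ = _ := by
      rw [cfc_const_add _ _ _ _ ha, cfc_mul _ _ _ _ hf, cfc_sub _ _ _ _, cfc_id' 𝕜 a,
        cfc_const c a]
      all_goals fun_prop

theorem matExt_eq_cfc {𝕜 n : Type*} [RCLike 𝕜] [Fintype n] [DecidableEq n] (f : ℝ → ℝ)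
    {A : Matrix n n 𝕜} (hA : A.IsHermitian) : matExt f A = cfc f A := by
  rw [hA.cfc_eq, IsHermitian.cfc, matExt, dif_pos hA, Unitary.conjStarAlgAut_apply]
  rfl

namespace Matrix

variable {n : Type*} [DecidableEq n]

theorem isHermitian_diagonal_ofReal_add_smul (t : n → ℝ) {H : Matrix n n ℂ}
    (hH : H.IsHermitian) (α : ℝ) : (diagonal (fun i ↦ (t i : ℂ)) + (α : ℂ) • H).IsHermitian :=
  (isHermitian_diagonal_of_self_adjoint _ (funext fun i ↦ Complex.conj_ofReal (t i))).add
    (hH.smul (Complex.conj_ofReal α))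

variable [Fintype n]

theorem diagonal_ofReal_add_smul_sub_algebraMap_apply (t : n → ℝ) (H : Matrix n n ℂ) (α : ℝ)
    (i k : n) :
    (diagonal (fun i ↦ (t i : ℂ)) + (α : ℂ) • H - algebraMap ℝ (Matrix n n ℂ) (t i)) i k
      = α * H i k := by
  by_cases hik : i = k
  · subst hik
    simp [algebraMap_eq_diagonal]
  · simp [algebraMap_eq_diagonal, hik]

theorem cfc_diagonal_ofReal_add_smul_apply (f : ℝ → ℝ) (t : n → ℝ) {H : Matrix n n ℂ}
    (hH : H.IsHermitian) (α : ℝ) (i j : n) :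
    cfc f (diagonal (fun i ↦ (t i : ℂ)) + (α : ℂ) • H) i j
      = f (t i) * (1 : Matrix n n ℂ) i j
        + α * (H * cfc (dslope f (t i)) (diagonal (fun i ↦ (t i : ℂ)) + (α : ℂ) • H)) i j := by
  have hB := isHermitian_diagonal_ofReal_add_smul t hH α
  rw [cfc_eq_algebraMap_add_sub_mul_cfc_dslope f (t i) hB.isSelfAdjoint
    (finite_real_spectrum.continuousOn _), add_apply, mul_apply, mul_apply, Finset.mul_sum]
  simp only [diagonal_ofReal_add_smul_sub_algebraMap_apply, mul_assoc]
  simp [algebraMap_eq_diagonal, one_apply, diagonal_apply]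

theorem cfc_diagonal_ofReal (f : ℝ → ℝ) (t : n → ℝ) :
    cfc f (diagonal (fun i ↦ (t i : ℂ))) = diagonal (fun i ↦ (f (t i) : ℂ)) := by
  ext i j
  simpa [diagonal_apply, one_apply] using
    cfc_diagonal_ofReal_add_smul_apply f t isHermitian_zero 0 i j

-- The L² operator norm makes `Matrix n n ℂ` a C⋆-algebra; its topology is the product topology.
open scoped Matrix.Norms.L2Operator in
theorem continuousAt_cfc_diagonal_ofReal_add_smul {U : Set ℝ} (hU : IsOpen U) {g : ℝ → ℝ}
    (hg : ContinuousOn g U) {t : n → ℝ} (ht : ∀ i, t i ∈ U) {H : Matrix n n ℂ}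
    (hH : H.IsHermitian) :
    ContinuousAt (fun α : ℝ ↦ cfc g (diagonal (fun i ↦ (t i : ℂ)) + (α : ℂ) • H)) 0 := by
  refine ContinuousAt.cfc_of_isOpen hU g hg (by fun_prop)
    (.of_forall fun α ↦ (isHermitian_diagonal_ofReal_add_smul t hH α).isSelfAdjoint) ?_
  rw [Complex.ofReal_zero, zero_smul, add_zero, ← spectrum.preimage_algebraMap ℂ,
    spectrum_diagonal]
  rintro x ⟨i, hi⟩
  have hti : t i = x := by simpa using Complex.ofReal_injective hi
  exact hti ▸ ht i

end Matrix

/-- For `T = Diag(t₁,…,tₙ)` with `tᵢ ∈ (a,b)`, `f` a `C¹` function on `(a,b)`, and `H`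
Hermitian, the map `α ↦ F(T + αH)` is differentiable at `0` with derivative `T_f ⊙ H`,
where `[T_f]_{ij} = f^{[1]}(tᵢ,tⱼ)` and `⊙` is the Hadamard product. -/
theorem matExt_hasDerivAt_diagonal {n : ℕ} (a b : ℝ) (f : ℝ → ℝ)
    (hf : ContDiffOn ℝ 1 f (Set.Ioo a b))
    (t : Fin n → ℝ) (ht : ∀ i, t i ∈ Set.Ioo a b)
    (H : Matrix (Fin n) (Fin n) ℂ) (hH : H.IsHermitian) :
    HasDerivAt
      (fun α : ℝ => matExt f (Matrix.diagonal (fun i => (t i : ℂ)) + (α : ℂ) • H))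
      (Matrix.hadamard (Matrix.of fun i j => (divDiff f (t i) (t j) : ℂ)) H) 0 := by
  have hcfc : (fun α : ℝ ↦ matExt f (diagonal (fun i ↦ (t i : ℂ)) + (α : ℂ) • H))
      = fun α : ℝ ↦ cfc f (diagonal (fun i ↦ (t i : ℂ)) + (α : ℂ) • H) :=
    funext fun α ↦ matExt_eq_cfc f (isHermitian_diagonal_ofReal_add_smul t hH α)
  rw [hcfc]
  refine hasDerivAt_pi.mpr fun i ↦ hasDerivAt_pi.mpr fun j ↦ ?_
  simp only [cfc_diagonal_ofReal_add_smul_apply f t hH]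
  have hcont : ContinuousAt (fun α : ℝ ↦
      (H * cfc (dslope f (t i)) (diagonal (fun i ↦ (t i : ℂ)) + (α : ℂ) • H)) i j) 0 :=
    (continuous_apply_apply i j).continuousAt.comp <| continuousAt_const.mul <|
      continuousAt_cfc_diagonal_ofReal_add_smul isOpen_Ioo
        (hf.continuousOn_dslope isOpen_Ioo (ht i)) ht hH
  convert (hasDerivAt_sub_smul_of_continuousAt hcont).const_add
    (f (t i) * (1 : Matrix (Fin n) (Fin n) ℂ) i j) using 1
  · ext α
    simp [Complex.real_smul]
  · simp [cfc_diagonal_ofReal, divDiff_eq_dslope, mul_comm]
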